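/- Let F : X → H be a continuous frame for a separable complex Hilbert space H with respect to a measure space (X, μ) with σ-finite positive measure, and let (e_k)_{k∈K} be an orthonormal basis of H. (i) If V : L²(X, μ) → H is a bounded operator with V T_F^* = Id_H such that (ker V)^⊥ is a reproducing kernel Hilbert subspace of L²(X, μ), then the function G(x) := ∑_{k∈K} conj((V^* e_k)(x)) e_k is well defined μ-a.e. and is a dual frame of F. (ii) Conversely, if G₀ is any dual frame of F, then with V = T_{G₀} one has V T_F^* = Id_H, (ker V)^⊥ = range(T_{G₀}^*) is a reproducing kernel Hilbert subspace of L²(X, μ), and G₀(x) = ∑_{k∈K} conj((V^* e_k)(x)) e_k for μ-a.e. x ∈ X. -/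

import Mathlib

open MeasureTheory ENNReal

noncomputable section

namespace ContFrame

variable {X : Type*} {H : Type*}

/-- The paper's inner product `⟨f, g⟩`: linear in the first argument and
conjugate-linear in the second (Mathlib's `inner` is conjugate-linear in the first). -/
def pinner [NormedAddCommGroup H] [InnerProductSpace ℂ H] (f g : H) : ℂ :=
  @inner ℂ _ _ g f

/-- `∫_X |⟨f, F x⟩|² dμ(x)`, as a lower integral. -/
def frameInt [MeasurableSpace X] [NormedAddCommGroup H] [InnerProductSpace ℂ H]
    (μ : Measure X) (F : X → H) (f : H) : ℝ≥0∞ :=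
  ∫⁻ x, (‖pinner f (F x)‖₊ : ℝ≥0∞) ^ 2 ∂μ

/-- `F` is weakly measurable: `x ↦ ⟨f, F x⟩` is μ-measurable for every `f`. -/
def WeaklyMeasurable [MeasurableSpace X] [NormedAddCommGroup H] [InnerProductSpace ℂ H]
    (μ : Measure X) (F : X → H) : Prop :=
  ∀ f : H, AEMeasurable (fun x => pinner f (F x)) μ

/-- `F` is a Bessel mapping for `H` w.r.t. `(X, μ)` with Bessel bound `B < ∞`. -/
def IsBesselMapping [MeasurableSpace X] [NormedAddCommGroup H] [InnerProductSpace ℂ H]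
    (μ : Measure X) (F : X → H) (B : ℝ≥0∞) : Prop :=
  B < ⊤ ∧ WeaklyMeasurable μ F ∧
    ∀ f : H, frameInt μ F f ≤ B * (‖f‖₊ : ℝ≥0∞) ^ 2

/-- `F` is a continuous frame for `H` w.r.t. `(X, μ)` with frame bounds `0 < A ≤ B < ∞`:
`A ‖f‖² ≤ ∫_X |⟨f, F x⟩|² dμ(x) ≤ B ‖f‖²` for all `f ∈ H`. -/
def IsContinuousFrame [MeasurableSpace X] [NormedAddCommGroup H] [InnerProductSpace ℂ H]
    (μ : Measure X) (F : X → H) (A B : ℝ≥0∞) : Prop :=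
  0 < A ∧ A ≤ B ∧ B < ⊤ ∧ WeaklyMeasurable μ F ∧
    ∀ f : H, A * (‖f‖₊ : ℝ≥0∞) ^ 2 ≤ frameInt μ F f ∧
      frameInt μ F f ≤ B * (‖f‖₊ : ℝ≥0∞) ^ 2

/-- A realization of the Hilbert tensor product `H = H₁ ⊗ H₂`: a bilinear map
`tmul` whose simple tensors satisfy `⟪a⊗b, c⊗d⟫ = ⟪a,c⟫⟪b,d⟫` and span a dense subspace. -/
structure HilbertTensorProduct (H₁ H₂ H : Type*)
    [NormedAddCommGroup H₁] [InnerProductSpace ℂ H₁]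
    [NormedAddCommGroup H₂] [InnerProductSpace ℂ H₂]
    [NormedAddCommGroup H] [InnerProductSpace ℂ H] where
  tmul : H₁ →ₗ[ℂ] H₂ →ₗ[ℂ] H
  inner_tmul : ∀ (a c : H₁) (b d : H₂),
    (inner ℂ (tmul a b) (tmul c d) : ℂ) = (inner ℂ a c : ℂ) * (inner ℂ b d : ℂ)
  dense_span : Dense (↑(Submodule.span ℂ {z : H | ∃ a b, z = tmul a b}) : Set H)

/-- `T : L²(X,μ) → H` is the synthesis operator of `F`, characterized by the fact
that its adjoint is the analysis operator `(T^* f)(x) = ⟨f, F x⟩`. -/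
def IsSynthesisOperator {X H : Type*} [MeasurableSpace X]
    [NormedAddCommGroup H] [InnerProductSpace ℂ H] [CompleteSpace H]
    (μ : Measure X) (F : X → H) (T : Lp ℂ 2 μ →L[ℂ] H) : Prop :=
  ∀ f : H, (ContinuousLinearMap.adjoint T f : X → ℂ) =ᵐ[μ] fun x => pinner f (F x)

/-- `G` is a dual frame of the continuous frame `F`:
`⟨f, g⟩ = ∫_X ⟨f, F x⟩ ⟨G x, g⟩ dμ(x)` for all `f, g ∈ H`. -/
def IsDualFrame {X H : Type*} [MeasurableSpace X]
    [NormedAddCommGroup H] [InnerProductSpace ℂ H]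
    (μ : Measure X) (F G : X → H) : Prop :=
  (∃ A B, IsContinuousFrame μ G A B) ∧
    ∀ f g : H, pinner f g = ∫ x, pinner f (F x) * pinner (G x) g ∂μ

/-- A subspace `S` of `L²(X, μ)` is a reproducing kernel Hilbert subspace: there is a
kernel map `k : X → L²` with values in `S` such that every `f ∈ S` is represented by
the function `x ↦ ⟨f, k_x⟩` (in particular, evaluations are bounded on `S`). -/
def IsRKHS {X : Type*} [MeasurableSpace X] (μ : Measure X)
    (S : Submodule ℂ (Lp ℂ 2 μ)) : Prop :=
  ∃ k : X → Lp ℂ 2 μ, (∀ x, k x ∈ S) ∧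
    ∀ f ∈ S, (f : X → ℂ) =ᵐ[μ] fun x => pinner f (k x)

/-!
If `(ker V)ᗮ` has reproducing kernel `κ`, then `V† f ∈ (ker V)ᗮ` gives
`(V† f)(x) = ⟨V† f, κ x⟩ = ⟨f, V (κ x)⟩`, so `V` is the synthesis operator of
`G x := V (κ x)`, and the series is the expansion of `G x` in the basis `e`.
For synthesis operators `T_F`, `T_G` one has `⟪T_G† g, T_F† f⟫ = ∫ ⟨f, F x⟩ ⟨G x, g⟩ dμ`,
so `T_G T_F† = id` is exactly the duality relation; it also makes `T_G†` bounded below,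
which is the lower frame bound of `G`.
Conversely, `T_F T_G† = id` makes the range of `T_G†` closed, hence equal to `(ker T_G)ᗮ`,
and projecting `T_F† (G x)` onto it gives a reproducing kernel.
-/

open scoped NNReal InnerProduct

theorem _root_.ContinuousLinearMap.comp_adjoint_eq_id_symm {𝕜 E F : Type*} [RCLike 𝕜]
    [NormedAddCommGroup E] [InnerProductSpace 𝕜 E] [CompleteSpace E]
    [NormedAddCommGroup F] [InnerProductSpace 𝕜 F] [CompleteSpace F] {S T : E →L[𝕜] F}
    (h : S.comp (T†) = ContinuousLinearMap.id 𝕜 F) :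
    T.comp (S†) = ContinuousLinearMap.id 𝕜 F := by
  simpa [ContinuousLinearMap.adjoint_comp, ContinuousLinearMap.adjoint_id] using
    congrArg ContinuousLinearMap.adjoint h

theorem _root_.ContinuousLinearMap.orthogonal_ker_eq_range_adjoint {𝕜 E F : Type*} [RCLike 𝕜]
    [NormedAddCommGroup E] [InnerProductSpace 𝕜 E] [CompleteSpace E]
    [NormedAddCommGroup F] [InnerProductSpace 𝕜 F] [CompleteSpace F] (T : E →L[𝕜] F)
    {S : E →L[𝕜] F} (h : S.comp (T†) = ContinuousLinearMap.id 𝕜 F) :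
    (LinearMap.ker (T : E →ₗ[𝕜] F))ᗮ =
      LinearMap.range (T† : F →ₗ[𝕜] E) := by
  rw [T.orthogonal_ker]
  refine IsClosed.submodule_topologicalClosure_eq ?_
  exact Function.LeftInverse.isClosed_range (fun f => DFunLike.congr_fun h f)
    S.continuous (T†).continuous

theorem _root_.MeasureTheory.Lp.lintegral_nnnorm_sq {α E : Type*} [MeasurableSpace α]
    {μ : Measure α} [NormedAddCommGroup E] (u : Lp E 2 μ) :
    ∫⁻ x, (‖u x‖₊ : ℝ≥0∞) ^ 2 ∂μ = (‖u‖₊ : ℝ≥0∞) ^ 2 := by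
  have := eLpNorm_nnreal_pow_eq_lintegral (f := u) (μ := μ) (p := 2) two_ne_zero
  simp only [NNReal.coe_ofNat, ENNReal.rpow_ofNat, ENNReal.coe_ofNat] at this
  rw [← Lp.enorm_def] at this
  simpa [enorm_eq_nnnorm] using this.symm

theorem _root_.MeasureTheory.L2.inner_eq_integral_of_ae_eq {α 𝕜 : Type*} [RCLike 𝕜]
    [MeasurableSpace α] {μ : Measure α} {u v : Lp 𝕜 2 μ} {a b : α → 𝕜}
    (ha : ⇑u =ᵐ[μ] a) (hb : ⇑v =ᵐ[μ] b) :
    inner 𝕜 u v = ∫ x, starRingEnd 𝕜 (a x) * b x ∂μ := by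
  rw [L2.inner_def]
  refine integral_congr_ae ?_
  filter_upwards [ha, hb] with x hux hvx
  rw [RCLike.inner_apply, hux, hvx, mul_comm]

section

variable [MeasurableSpace X] {μ : Measure X}
  [NormedAddCommGroup H] [InnerProductSpace ℂ H]

theorem pinner_conj_symm (f g : H) : starRingEnd ℂ (pinner f g) = pinner g f :=
  inner_conj_symm f g

theorem frameInt_eq_of_ae_eq {G : X → H} {f : H} {u : Lp ℂ 2 μ}
    (hu : ⇑u =ᵐ[μ] fun x => pinner f (G x)) :
    frameInt μ G f = (‖u‖₊ : ℝ≥0∞) ^ 2 := by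
  rw [frameInt, ← Lp.lintegral_nnnorm_sq u]
  refine lintegral_congr_ae ?_
  filter_upwards [hu] with x hx
  rw [hx]

theorem isContinuousFrame_of_ae_eq_of_nnnorm_le {G : X → H} (W : H →L[ℂ] Lp ℂ 2 μ)
    (hW : ∀ f, ⇑(W f) =ᵐ[μ] fun x => pinner f (G x)) {c : ℝ≥0} (hc : 0 < c)
    (hc_le : ∀ f, ‖f‖₊ ≤ c * ‖W f‖₊) :
    IsContinuousFrame μ G (c⁻¹ ^ 2 : ℝ≥0) (max (c⁻¹ ^ 2) (‖W‖₊ ^ 2) : ℝ≥0) := by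
  refine ⟨ENNReal.coe_pos.2 (by positivity), ENNReal.coe_le_coe.2 (le_max_left _ _),
    ENNReal.coe_lt_top, fun f => (Lp.aestronglyMeasurable (W f)).aemeasurable.congr (hW f),
    fun f => ?_⟩
  rw [frameInt_eq_of_ae_eq (hW f)]
  have lower : c⁻¹ ^ 2 * ‖f‖₊ ^ 2 ≤ ‖W f‖₊ ^ 2 :=
    calc c⁻¹ ^ 2 * ‖f‖₊ ^ 2 ≤ c⁻¹ ^ 2 * (c * ‖W f‖₊) ^ 2 := by gcongr; exact hc_le f
      _ = ‖W f‖₊ ^ 2 := by field_simp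
  have upper : ‖W f‖₊ ^ 2 ≤ max (c⁻¹ ^ 2) (‖W‖₊ ^ 2) * ‖f‖₊ ^ 2 :=
    calc ‖W f‖₊ ^ 2 ≤ (‖W‖₊ * ‖f‖₊) ^ 2 := by gcongr; exact W.le_opNNNorm f
      _ ≤ max (c⁻¹ ^ 2) (‖W‖₊ ^ 2) * ‖f‖₊ ^ 2 := by
        rw [mul_pow]; gcongr; exact le_max_right _ _
  exact ⟨by exact_mod_cast lower, by exact_mod_cast upper⟩

theorem isRKHS_of_ae_eq_pinner (S : Submodule ℂ (Lp ℂ 2 μ)) [S.HasOrthogonalProjection]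
    (k : X → Lp ℂ 2 μ) (hk : ∀ f ∈ S, ⇑f =ᵐ[μ] fun x => pinner f (k x)) :
    IsRKHS μ S := by
  refine ⟨fun x => S.starProjection (k x), fun x => S.starProjection_apply_mem _,
    fun f hf => (hk f hf).trans (.of_forall fun x => ?_)⟩
  simp only [pinner]
  rw [S.inner_starProjection_left_eq_right, S.starProjection_eq_self_iff.2 hf]

variable [CompleteSpace H]

theorem isSynthesisOperator_of_isRKHS {V : Lp ℂ 2 μ →L[ℂ] H}
    (hV : IsRKHS μ (LinearMap.ker (V : Lp ℂ 2 μ →ₗ[ℂ] H))ᗮ) :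
    ∃ G : X → H, IsSynthesisOperator μ G V := by
  obtain ⟨κ, -, hκ⟩ := hV
  refine ⟨fun x => V (κ x), fun f => ?_⟩
  have hmem : (V†) f ∈ (LinearMap.ker (V : Lp ℂ 2 μ →ₗ[ℂ] H))ᗮ := by
    rw [V.orthogonal_ker]
    exact Submodule.le_topologicalClosure _ ⟨f, rfl⟩
  refine (hκ _ hmem).trans (.of_forall fun x => ?_)
  exact ContinuousLinearMap.adjoint_inner_right V (κ x) f

namespace IsSynthesisOperator

variable {F G : X → H} {TF TG : Lp ℂ 2 μ →L[ℂ] H}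

theorem inner_adjoint_apply (hF : IsSynthesisOperator μ F TF) (hG : IsSynthesisOperator μ G TG)
    (f g : H) :
    inner ℂ ((TG†) g) ((TF†) f) =
      ∫ x, pinner f (F x) * pinner (G x) g ∂μ := by
  rw [L2.inner_eq_integral_of_ae_eq (hG g) (hF f)]
  congr 1 with x
  rw [pinner_conj_symm, mul_comm]

theorem comp_adjoint_eq_id_iff (hF : IsSynthesisOperator μ F TF)
    (hG : IsSynthesisOperator μ G TG) :
    TG.comp (TF†) = ContinuousLinearMap.id ℂ H ↔
      ∀ f g, pinner f g = ∫ x, pinner f (F x) * pinner (G x) g ∂μ := by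
  simp only [← hF.inner_adjoint_apply hG, ContinuousLinearMap.adjoint_inner_left,
    ContinuousLinearMap.ext_iff, ContinuousLinearMap.comp_apply, ContinuousLinearMap.id_apply]
  refine forall_congr' fun f => ?_
  rw [eq_comm, ext_iff_inner_left ℂ]
  rfl

theorem exists_isContinuousFrame (hG : IsSynthesisOperator μ G TG) {S : Lp ℂ 2 μ →L[ℂ] H}
    (hS : S.comp (TG†) = ContinuousLinearMap.id ℂ H) :
    ∃ A B, IsContinuousFrame μ G A B := by
  refine ⟨_, _, isContinuousFrame_of_ae_eq_of_nnnorm_le _ hG (c := ‖S‖₊ + 1) (by positivity)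
    fun f => ?_⟩
  calc ‖f‖₊ = ‖S ((TG†) f)‖₊ := by
        rw [← ContinuousLinearMap.comp_apply, hS, ContinuousLinearMap.id_apply]
    _ ≤ ‖S‖₊ * ‖(TG†) f‖₊ := S.le_opNNNorm _
    _ ≤ (‖S‖₊ + 1) * ‖(TG†) f‖₊ := by gcongr; exact le_self_add

theorem isDualFrame (hF : IsSynthesisOperator μ F TF) (hG : IsSynthesisOperator μ G TG)
    (h : TG.comp (TF†) = ContinuousLinearMap.id ℂ H) :
    IsDualFrame μ F G :=
  ⟨hG.exists_isContinuousFrame (ContinuousLinearMap.comp_adjoint_eq_id_symm h),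
    (hF.comp_adjoint_eq_id_iff hG).1 h⟩

theorem ae_hasSum {K : Type*} [Countable K] (hG : IsSynthesisOperator μ G TG)
    (e : HilbertBasis K ℂ H) :
    ∀ᵐ x ∂μ, HasSum
      (fun k => starRingEnd ℂ (((TG†) (e k)) x) • (e k : H)) (G x) := by
  filter_upwards [ae_all_iff.2 fun k => hG (e k)] with x hx
  convert e.hasSum_repr (G x) using 2 with k
  rw [hx k, pinner_conj_symm, e.repr_apply_apply, pinner]

theorem isRKHS_orthogonal_ker (hG : IsSynthesisOperator μ G TG) {S : Lp ℂ 2 μ →L[ℂ] H}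
    (hS : S.comp (TG†) = ContinuousLinearMap.id ℂ H) :
    IsRKHS μ (LinearMap.ker (TG : Lp ℂ 2 μ →ₗ[ℂ] H))ᗮ := by
  refine isRKHS_of_ae_eq_pinner _ (fun x => (S†) (G x)) ?_
  rw [TG.orthogonal_ker_eq_range_adjoint hS]
  rintro _ ⟨h, rfl⟩
  refine (hG h).trans (.of_forall fun x => ?_)
  simp only [pinner, ContinuousLinearMap.coe_coe, ContinuousLinearMap.adjoint_inner_left]
  rw [← ContinuousLinearMap.comp_apply, hS, ContinuousLinearMap.id_apply]

end IsSynthesisOperator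

end

theorem dual_frames_from_left_inverses_general
    {X H K : Type*} [MeasurableSpace X]
    [NormedAddCommGroup H] [InnerProductSpace ℂ H] [CompleteSpace H]
    [Countable K]
    (μ : Measure X)
    (F : X → H)
    (TF : Lp ℂ 2 μ →L[ℂ] H) (hTF : IsSynthesisOperator μ F TF)
    (e : HilbertBasis K ℂ H) :
    -- (i)
    (∀ V : Lp ℂ 2 μ →L[ℂ] H,
      V.comp (ContinuousLinearMap.adjoint TF) = ContinuousLinearMap.id ℂ H →
      IsRKHS μ (LinearMap.ker (V : Lp ℂ 2 μ →ₗ[ℂ] H))ᗮ →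
      ∃ G : X → H,
        (∀ᵐ x ∂μ, HasSum
          (fun k => (starRingEnd ℂ) ((ContinuousLinearMap.adjoint V (e k)) x) • (e k : H))
          (G x)) ∧
        IsDualFrame μ F G) ∧
    -- (ii)
    (∀ G₀ : X → H, IsDualFrame μ F G₀ →
      ∀ TG : Lp ℂ 2 μ →L[ℂ] H, IsSynthesisOperator μ G₀ TG →
        TG.comp (ContinuousLinearMap.adjoint TF) = ContinuousLinearMap.id ℂ H ∧
        (LinearMap.ker (TG : Lp ℂ 2 μ →ₗ[ℂ] H))ᗮ =
          LinearMap.range (ContinuousLinearMap.adjoint TG : H →ₗ[ℂ] Lp ℂ 2 μ) ∧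
        IsRKHS μ (LinearMap.ker (TG : Lp ℂ 2 μ →ₗ[ℂ] H))ᗮ ∧
        ∀ᵐ x ∂μ, HasSum
          (fun k => (starRingEnd ℂ) ((ContinuousLinearMap.adjoint TG (e k)) x) • (e k : H))
          (G₀ x)) := by
  refine ⟨fun V hV hker => ?_, fun G₀ hG₀ TG hTG => ?_⟩
  · obtain ⟨G, hG⟩ := isSynthesisOperator_of_isRKHS hker
    exact ⟨G, hG.ae_hasSum e, hTF.isDualFrame hG hV⟩
  · have hcomp := (hTF.comp_adjoint_eq_id_iff hTG).2 hG₀.2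
    have hleft := ContinuousLinearMap.comp_adjoint_eq_id_symm hcomp
    exact ⟨hcomp, TG.orthogonal_ker_eq_range_adjoint hleft, hTG.isRKHS_orthogonal_ker hleft,
      hTG.ae_hasSum e⟩

/-- Let `F` be a continuous frame for `H`, `(e_k)` an orthonormal basis.
(i) If `V : L²(X,μ) → H` is a bounded left inverse of the analysis operator `T_F^*` with
`(ker V)^⊥` an RKHS, then `G(x) = ∑_k conj((V^* e_k)(x)) e_k` is defined a.e. and is a
dual frame of `F`. (ii) Conversely, every dual frame `G₀` of `F` arises this way from
`V = T_{G₀}`, whose kernel's orthocomplement `(ker V)^⊥ = range T_{G₀}^*` is an RKHS. -/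
theorem dual_frames_from_left_inverses
    {X H K : Type*} [MeasurableSpace X]
    [NormedAddCommGroup H] [InnerProductSpace ℂ H] [CompleteSpace H]
      [TopologicalSpace.SeparableSpace H]
    [Countable K]
    (μ : Measure X) [SigmaFinite μ]
    (F : X → H) (A B : ℝ≥0∞) (hF : IsContinuousFrame μ F A B)
    (TF : Lp ℂ 2 μ →L[ℂ] H) (hTF : IsSynthesisOperator μ F TF)
    (e : HilbertBasis K ℂ H) :
    -- (i)
    (∀ V : Lp ℂ 2 μ →L[ℂ] H,
      V.comp (ContinuousLinearMap.adjoint TF) = ContinuousLinearMap.id ℂ H →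
      IsRKHS μ (LinearMap.ker (V : Lp ℂ 2 μ →ₗ[ℂ] H))ᗮ →
      ∃ G : X → H,
        (∀ᵐ x ∂μ, HasSum
          (fun k => (starRingEnd ℂ) ((ContinuousLinearMap.adjoint V (e k)) x) • (e k : H))
          (G x)) ∧
        IsDualFrame μ F G) ∧
    -- (ii)
    (∀ G₀ : X → H, IsDualFrame μ F G₀ →
      ∀ TG : Lp ℂ 2 μ →L[ℂ] H, IsSynthesisOperator μ G₀ TG →
        TG.comp (ContinuousLinearMap.adjoint TF) = ContinuousLinearMap.id ℂ H ∧
        (LinearMap.ker (TG : Lp ℂ 2 μ →ₗ[ℂ] H))ᗮ =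
          LinearMap.range (ContinuousLinearMap.adjoint TG : H →ₗ[ℂ] Lp ℂ 2 μ) ∧
        IsRKHS μ (LinearMap.ker (TG : Lp ℂ 2 μ →ₗ[ℂ] H))ᗮ ∧
        ∀ᵐ x ∂μ, HasSum
          (fun k => (starRingEnd ℂ) ((ContinuousLinearMap.adjoint TG (e k)) x) • (e k : H))
          (G₀ x)) :=
  dual_frames_from_left_inverses_general μ F TF hTF e

end ContFrame
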